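/- Let F ∈ ℂ[[t]] be the unique formal power series with constant coefficient 1 satisfying F(t·(1+2t)⁻¹) = F(t)·(1 − t²). Then F(t)·F(−t·(1−2t)⁻¹) = 1 in ℂ[[t]], where F(−t·(1−2t)⁻¹) denotes substitution of the power series −t·(1−2t)⁻¹ (which has zero constant term) into F. -/

import Mathlib

open PowerSeries

/-- Substitution of a power series `g` (with zero constant coefficient) into a power
series `F`: the `n`-th coefficient of `F(g)` is `∑_{k ≤ n} (coeff k F) · coeff n (g^k)`. -/
noncomputable def psSubst (g F : PowerSeries ℂ) : PowerSeries ℂ :=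
  PowerSeries.mk fun n =>
    ∑ k ∈ Finset.range (n + 1), PowerSeries.coeff k F * PowerSeries.coeff n (g ^ k)

/-!
Substituting a series without constant term is a ring endomorphism of `ℂ⟦t⟧`, and
substitutions compose. With `τ = t(1+2t)⁻¹` and
`σ = -t(1-2t)⁻¹` one has `τ(-t) = σ` and `σ(τ) = -t`. Substituting `-t` into the functional
equation gives `F(σ) = F(-t)(1 - t²)`, so `R = F · F(σ)` satisfies
`R(τ) = F(τ) · F(-t) = F · (1 - t²) · F(-t) = R`.
Since `τ = t - 2t² + ⋯`, a series fixed by `τ` is constant: if `t^n` (`n ≥ 1`) is its first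
non-constant term, the coefficients of `t^(n+1)` on both sides differ by `-2n` times that of `t^n`.
Hence `R = R(0) = 1`.
-/

namespace PowerSeries

section CommRing

variable {R : Type*} [CommRing R]

theorem coeff_pow_eq_zero_of_lt {a : R⟦X⟧} (ha : constantCoeff a = 0) {n k : ℕ} (h : n < k) :
    coeff n (a ^ k) = 0 :=
  X_pow_dvd_iff.1 (pow_dvd_pow_of_dvd (X_dvd_iff.2 ha) k) n h

theorem coeff_subst_eq_sum_range {a : R⟦X⟧} (ha : constantCoeff a = 0) (f : R⟦X⟧) (n : ℕ) :
    coeff n (subst a f) = ∑ k ∈ Finset.range (n + 1), coeff k f * coeff n (a ^ k) := by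
  rw [coeff_subst' (HasSubst.of_constantCoeff_zero' ha)]
  refine finsum_eq_sum_of_support_subset _ fun k hk => ?_
  rw [Function.mem_support] at hk
  rw [Finset.coe_range, Set.mem_Iio, Nat.lt_succ_iff]
  by_contra! hnk
  exact hk (by rw [coeff_pow_eq_zero_of_lt ha hnk, smul_zero])

theorem constantCoeff_subst_of_constantCoeff_zero {a : R⟦X⟧} (ha : constantCoeff a = 0)
    (f : R⟦X⟧) : constantCoeff (subst a f) = constantCoeff f := by
  rw [← coeff_zero_eq_constantCoeff_apply, coeff_subst_eq_sum_range ha]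
  simp

theorem coeff_pow_self {τ : R⟦X⟧} (h0 : constantCoeff τ = 0) (n : ℕ) :
    coeff n (τ ^ n) = coeff 1 τ ^ n := by
  obtain ⟨v, rfl⟩ := X_dvd_iff.2 h0
  simpa [mul_pow, coeff_zero_eq_constantCoeff] using coeff_X_pow_mul' (v ^ n) n n

theorem coeff_succ_pow_self {τ : R⟦X⟧} (h0 : constantCoeff τ = 0) (n : ℕ) :
    coeff (n + 1) (τ ^ n) = n * coeff 2 τ * coeff 1 τ ^ (n - 1) := by
  obtain ⟨v, rfl⟩ := X_dvd_iff.2 h0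
  rw [mul_pow, mul_comm, add_comm, coeff_mul_X_pow, coeff_one_pow]
  simp [coeff_succ_X_mul, coeff_zero_eq_constantCoeff]

theorem eq_C_of_subst_eq_self [NoZeroDivisors R] [CharZero R] {τ f : R⟦X⟧}
    (h0 : constantCoeff τ = 0) (h1 : coeff 1 τ = 1) (h2 : coeff 2 τ ≠ 0)
    (hf : subst τ f = f) : f = C (constantCoeff f) := by
  have hpos : ∀ n, 0 < n → coeff n f = 0 := by
    intro n
    induction n using Nat.strong_induction_on with
    | _ n IH =>
      intro hn
      -- In the coefficient of `X ^ (n + 1)` only the terms `k = n, n + 1` of the sum survive.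
      have hcoeff := congrArg (coeff (n + 1)) hf
      rw [coeff_subst_eq_sum_range h0, Finset.sum_range_succ, Finset.sum_range_succ,
        Finset.sum_eq_zero, coeff_pow_self h0, coeff_succ_pow_self h0, h1, one_pow, one_pow]
        at hcoeff
      · have : coeff n f * (n * coeff 2 τ) = 0 := by linear_combination hcoeff
        exact (mul_eq_zero.1 this).resolve_right (mul_ne_zero (Nat.cast_ne_zero.2 hn.ne') h2)
      · rintro (_ | k) hk
        · simp [coeff_one]
        · rw [IH (k + 1) (Finset.mem_range.1 hk) k.succ_pos, zero_mul]
  ext (_ | n)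
  · simp
  · rw [hpos _ n.succ_pos, coeff_C, if_neg n.succ_ne_zero]

theorem subst_neg_X_eq_rescale (f : R⟦X⟧) : subst (-X : R⟦X⟧) f = rescale (-1) f := by
  rw [rescale_eq_subst, neg_one_smul]

end CommRing

variable {k : Type*} [Field k]

theorem map_inv_of_constantCoeff_ne_zero {F : Type*} [FunLike F k⟦X⟧ k⟦X⟧]
    [RingHomClass F k⟦X⟧ k⟦X⟧] (φ : F) {f : k⟦X⟧} (hf : constantCoeff f ≠ 0) :
    φ f⁻¹ = (φ f)⁻¹ := by
  have h : φ f * φ f⁻¹ = 1 := by rw [← map_mul, PowerSeries.mul_inv_cancel f hf, map_one]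
  have hφf : constantCoeff (φ f) ≠ 0 :=
    (isUnit_iff_constantCoeff.1 (IsUnit.of_mul_eq_one _ h)).ne_zero
  exact (eq_inv_iff_mul_eq_one hφf).2 (by rw [mul_comm, h])

end PowerSeries

theorem psSubst_eq_subst {g : ℂ⟦X⟧} (hg : constantCoeff g = 0) (F : ℂ⟦X⟧) :
    psSubst g F = subst g F := by
  ext n
  rw [psSubst, coeff_mk, coeff_subst_eq_sum_range hg]

section NormalizingSeries

variable (k : Type*) [Field k]

/-- In the variable `t = h/u`, substituting `shiftSeries` is the shift `u ↦ u + 2h`. -/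
noncomputable def shiftSeries : k⟦X⟧ := X * (1 + 2 * X)⁻¹

/-- In the variable `t = h/z`, substituting `crossingSeries` is the crossing `z ↦ -z + 2h`. -/
noncomputable def crossingSeries : k⟦X⟧ := -X * (1 - 2 * X)⁻¹

variable {k}

theorem one_add_two_X_mul_inv : (1 + 2 * X : k⟦X⟧) * (1 + 2 * X)⁻¹ = 1 :=
  PowerSeries.mul_inv_cancel _ (by simp)

theorem constantCoeff_shiftSeries : constantCoeff (shiftSeries k) = 0 := by
  simp [shiftSeries]

theorem constantCoeff_crossingSeries : constantCoeff (crossingSeries k) = 0 := by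
  simp [crossingSeries]

theorem coeff_one_shiftSeries : coeff 1 (shiftSeries k) = 1 := by
  simp [shiftSeries]

theorem coeff_two_shiftSeries : coeff 2 (shiftSeries k) = -2 := by
  have h := congrArg (coeff 1) (one_add_two_X_mul_inv (k := k))
  simp only [coeff_one_mul, map_add, map_one, map_mul, map_ofNat, coeff_one_X, constantCoeff_X,
    coeff_one, constantCoeff_inv] at h
  rw [shiftSeries, coeff_succ_X_mul]
  linear_combination h

theorem subst_neg_X_shiftSeries : subst (-X : k⟦X⟧) (shiftSeries k) = crossingSeries k := by
  rw [subst_neg_X_eq_rescale, shiftSeries, map_mul,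
    map_inv_of_constantCoeff_ne_zero _ (by simp), map_add, map_one, map_mul, map_ofNat]
  simp [crossingSeries, sub_eq_add_neg]

theorem subst_shiftSeries_crossingSeries :
    subst (shiftSeries k) (crossingSeries k) = (-X : k⟦X⟧) := by
  have hτ := HasSubst.of_constantCoeff_zero' (constantCoeff_shiftSeries (k := k))
  have hinv : (1 - 2 * shiftSeries k)⁻¹ = 1 + 2 * X :=
    (inv_eq_iff_mul_eq_one (by simp [shiftSeries])).2
      (by rw [shiftSeries]; linear_combination (-2 * X) * one_add_two_X_mul_inv (k := k))
  rw [crossingSeries, ← coe_substAlgHom hτ, map_mul,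
    map_inv_of_constantCoeff_ne_zero _ (by simp)]
  simp only [map_neg, map_sub, map_one, map_mul, map_ofNat, coe_substAlgHom, subst_X hτ, hinv]
  rw [shiftSeries]
  linear_combination (-X) * one_add_two_X_mul_inv (k := k)

end NormalizingSeries

/-- If `F ∈ ℂ[[t]]` has constant coefficient `1` and satisfies
`F(t·(1+2t)⁻¹) = F(t)·(1 − t²)`, then `F(t)·F(−t·(1−2t)⁻¹) = 1`. -/
theorem crossing_of_normalizing_series (F : PowerSeries ℂ)
    (hF1 : PowerSeries.constantCoeff F = 1)
    (hF2 : psSubst (PowerSeries.X * (1 + 2 * PowerSeries.X)⁻¹) F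
      = F * (1 - PowerSeries.X ^ 2)) :
    F * psSubst (-PowerSeries.X * (1 - 2 * PowerSeries.X)⁻¹) F = 1 := by
  have hτ := HasSubst.of_constantCoeff_zero' (constantCoeff_shiftSeries (k := ℂ))
  have hσ := HasSubst.of_constantCoeff_zero' (constantCoeff_crossingSeries (k := ℂ))
  have hX := HasSubst.of_constantCoeff_zero' (by simp : constantCoeff (-X : ℂ⟦X⟧) = 0)
  change psSubst (shiftSeries ℂ) F = _ at hF2
  rw [psSubst_eq_subst constantCoeff_shiftSeries] at hF2
  change F * psSubst (crossingSeries ℂ) F = 1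
  rw [psSubst_eq_subst constantCoeff_crossingSeries]
  have hFσ : subst (crossingSeries ℂ) F = subst (-X : ℂ⟦X⟧) F * (1 - X ^ 2) := by
    rw [← subst_neg_X_shiftSeries, ← subst_comp_subst_apply hτ hX, hF2, subst_mul hX,
      subst_neg_X_eq_rescale (1 - X ^ 2)]
    simp
  have hfixed : subst (shiftSeries ℂ) (F * subst (crossingSeries ℂ) F)
      = F * subst (crossingSeries ℂ) F := by
    rw [subst_mul hτ, subst_comp_subst_apply hσ hτ, subst_shiftSeries_crossingSeries, hF2, hFσ]
    ring
  rw [eq_C_of_subst_eq_self constantCoeff_shiftSeries coeff_one_shiftSeries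
    (by norm_num [coeff_two_shiftSeries]) hfixed, map_mul,
    constantCoeff_subst_of_constantCoeff_zero constantCoeff_crossingSeries, hF1, mul_one, map_one]
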